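/- For every positive integer r there exists a nontrivial connected graph G with γ'(G) − γ(G) > r, and a nontrivial connected graph H with γ(H) − γ'(H) > r. (E.g., G = K_{2r+4} and H = R_{12r}.) -/

import Mathlib

/-!
In `K_{2r+4}` a single vertex dominates all vertices, whereas an edge dominating set leaves at most
one vertex uncovered (two uncovered vertices would span an undominated edge), so it needs at least
`r + 2` edges. In the ridged graph `R_{3n}` the pendant vertex `v_i` is dominated only by `v_i` or
`u_i`, so `γ ≥ n`; for `n = 2m` the `m` spine edges `u_{2k-1} u_{2k}` dominate every edge, since
every edge contains some `u_i`.
-/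

/-- Two elements (vertices or edges) of a graph are *associated* if they are
adjacent or incident. -/
def elemAssoc {V : Type*} (G : SimpleGraph V) : V ⊕ Sym2 V → V ⊕ Sym2 V → Prop
  | .inl u, .inl v => G.Adj u v
  | .inl u, .inr e => u ∈ e
  | .inr e, .inl u => u ∈ e
  | .inr e, .inr f => e ≠ f ∧ ∃ u, u ∈ e ∧ u ∈ f

/-- The set of vertex-elements. -/
def vertElems (V : Type*) : Set (V ⊕ Sym2 V) := Set.range Sum.inl

/-- The set of edge-elements of `G`. -/
def edgeElems {V : Type*} (G : SimpleGraph V) : Set (V ⊕ Sym2 V) :=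
  Sum.inr '' G.edgeSet

/-- `A` dominates `W`: every element of `W \ (A ∩ W)` is associated to an element of `A`. -/
def Dominates {V : Type*} (G : SimpleGraph V) (A W : Set (V ⊕ Sym2 V)) : Prop :=
  ∀ w ∈ W, w ∉ A → ∃ a ∈ A, elemAssoc G a w

/-- `γ_{U,W}(G)`: minimum cardinality of a subset `A ⊆ U` dominating `W`. -/
noncomputable def gammaUW {V : Type*} (G : SimpleGraph V)
    (U W : Set (V ⊕ Sym2 V)) : ℕ :=
  sInf {n | ∃ A ⊆ U, Dominates G A W ∧ A.ncard = n}

/-- The ridged graph `R_{3n}`.  The vertex `(i, 0)` is `u_{i+1}`, `(i, 1)` is `v_{i+1}`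
and `(i, 2)` is `w_{i+1}`.  The `u_i` form a path and each `u_i` has the two pendant
neighbours `v_i`, `w_i`. -/
def ridgedRel (n : ℕ) : Fin n × Fin 3 → Fin n × Fin 3 → Prop
  | (i, c), (j, d) =>
      (c = 0 ∧ d = 0 ∧ (j : ℕ) = (i : ℕ) + 1) ∨ (c = 0 ∧ i = j ∧ (d = 1 ∨ d = 2))

def ridgedGraph (n : ℕ) : SimpleGraph (Fin n × Fin 3) where
  Adj x y := x ≠ y ∧ (ridgedRel n x y ∨ ridgedRel n y x)
  symm := ⟨fun _ _ ⟨h1, h2⟩ => ⟨h1.symm, h2.symm⟩⟩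
  loopless := ⟨fun _ ⟨h1, _⟩ => h1 rfl⟩

section Domination

variable {V : Type*} {G : SimpleGraph V} {A U W : Set (V ⊕ Sym2 V)}

lemma gammaUW_le_ncard (hAU : A ⊆ U) (hA : Dominates G A W) : gammaUW G U W ≤ A.ncard :=
  Nat.sInf_le ⟨A, hAU, hA, rfl⟩

lemma exists_dominates_ncard_eq_gammaUW (hWU : W ⊆ U) :
    ∃ A ⊆ U, Dominates G A W ∧ A.ncard = gammaUW G U W :=
  Nat.sInf_mem (s := {n | ∃ A ⊆ U, Dominates G A W ∧ A.ncard = n})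
    ⟨U.ncard, U, subset_rfl, fun _ hw hwU => absurd (hWU hw) hwU, rfl⟩

lemma dominates_edgeElems_of_forall
    (hA : ∀ e ∈ G.edgeSet, ∃ f, Sum.inr f ∈ A ∧ ∃ v ∈ e, v ∈ f) :
    Dominates G A (edgeElems G) := by
  rintro _ ⟨e, he, rfl⟩ heA
  obtain ⟨f, hfA, v, hve, hvf⟩ := hA e he
  exact ⟨_, hfA, fun hfe => heA (hfe ▸ hfA), v, hvf, hve⟩

end Domination

section Complete

variable {V : Type*}

lemma gammaUW_top_vertElems_le_one [Nonempty V] :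
    gammaUW (⊤ : SimpleGraph V) (vertElems V) (vertElems V) ≤ 1 := by
  obtain ⟨v⟩ := ‹Nonempty V›
  refine (gammaUW_le_ncard (A := {Sum.inl v}) ?_ ?_).trans_eq (Set.ncard_singleton _)
  · simp [vertElems]
  · rintro _ ⟨w, rfl⟩ hw
    exact ⟨Sum.inl v, rfl, fun hvw => hw (by rw [hvw]; rfl)⟩

lemma card_biUnion_toFinset_le_two_mul [DecidableEq V] (B : Finset (Sym2 V)) :
    (B.biUnion Sym2.toFinset).card ≤ 2 * B.card := by
  refine Finset.card_biUnion_le.trans ?_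
  rw [mul_comm, ← smul_eq_mul, ← Finset.sum_const]
  refine Finset.sum_le_sum fun e _ => ?_
  rw [Sym2.card_toFinset]
  split_ifs <;> omega

lemma card_compl_biUnion_toFinset_le_one_of_dominates_top [Fintype V] [DecidableEq V]
    {B : Finset (Sym2 V)} (hdom : Dominates ⊤ (Sum.inr '' (B : Set (Sym2 V))) (edgeElems ⊤)) :
    (B.biUnion Sym2.toFinset)ᶜ.card ≤ 1 := by
  refine Finset.card_le_one.mpr fun u hu v hv => by_contra fun huv => ?_
  simp only [Finset.mem_compl, Finset.mem_biUnion, Sym2.mem_toFinset, not_exists, not_and]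
    at hu hv
  have huvB : (Sum.inr s(u, v) : V ⊕ Sym2 V) ∉ Sum.inr '' (B : Set (Sym2 V)) := by
    simpa using fun h => hu _ h (Sym2.mem_mk_left u v)
  obtain ⟨_, ⟨f, hfB, rfl⟩, -, x, hxf, hx⟩ :=
    hdom _ ⟨s(u, v), by simpa using huv, rfl⟩ huvB
  rcases Sym2.mem_iff.mp hx with rfl | rfl
  exacts [hu f hfB hxf, hv f hfB hxf]

lemma card_le_two_mul_gammaUW_top_add_one [Fintype V] :
    Fintype.card V ≤
      2 * gammaUW (⊤ : SimpleGraph V) (edgeElems ⊤) (edgeElems ⊤) + 1 := by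
  classical
  obtain ⟨A, hA, hdom, hcard⟩ :=
    exists_dominates_ncard_eq_gammaUW (G := ⊤) (subset_refl (edgeElems (⊤ : SimpleGraph V)))
  obtain ⟨B, rfl⟩ : ∃ B : Set (Sym2 V), Sum.inr '' B = A :=
    Set.subset_range_iff_exists_image_eq.mp (hA.trans (Set.image_subset_range _ _))
  lift B to Finset (Sym2 V) using B.toFinite
  rw [Set.ncard_image_of_injective _ Sum.inr_injective, Set.ncard_coe_finset] at hcard
  have hcovered := card_biUnion_toFinset_le_two_mul B
  have huncovered := card_compl_biUnion_toFinset_le_one_of_dominates_top hdom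
  have := Finset.card_add_card_compl (B.biUnion Sym2.toFinset)
  omega

end Complete

section Ridged

variable {n : ℕ}

lemma ridgedGraph_adj_pendant (i : Fin n) {c : Fin 3} (hc : c ≠ 0) :
    (ridgedGraph n).Adj (i, 0) (i, c) :=
  ⟨by simp [Ne.symm hc], .inl (.inr ⟨rfl, rfl, by omega⟩)⟩

lemma ridgedGraph_adj_succ {i j : Fin n} (hij : (j : ℕ) = i + 1) :
    (ridgedGraph n).Adj (i, 0) (j, 0) :=
  ⟨fun h => by simp [Prod.ext_iff, Fin.ext_iff] at h; omega, .inl (.inl ⟨rfl, rfl, hij⟩)⟩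

lemma ridgedGraph_adj_one_iff {x : Fin n × Fin 3} {i : Fin n} :
    (ridgedGraph n).Adj x (i, 1) ↔ x = (i, 0) := by
  obtain ⟨j, c⟩ := x
  constructor
  · rintro ⟨-, (⟨-, h, -⟩ | ⟨rfl, rfl, -⟩) | (⟨h, -⟩ | ⟨h, -⟩)⟩ <;> simp_all
  · rintro ⟨⟩
    exact ridgedGraph_adj_pendant i (by decide)

lemma ridgedGraph_exists_spine_mem_of_mem_edgeSet {e : Sym2 (Fin n × Fin 3)}
    (he : e ∈ (ridgedGraph n).edgeSet) :
    ∃ i, (i, 0) ∈ e := by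
  induction e using Sym2.ind with
  | _ x y =>
    obtain ⟨i, c⟩ := x
    obtain ⟨j, d⟩ := y
    obtain ⟨-, (⟨rfl, -⟩ | ⟨rfl, -⟩) | (⟨rfl, -⟩ | ⟨rfl, -⟩)⟩ := he
    exacts [⟨i, Sym2.mem_mk_left _ _⟩, ⟨i, Sym2.mem_mk_left _ _⟩,
      ⟨j, Sym2.mem_mk_right _ _⟩, ⟨j, Sym2.mem_mk_right _ _⟩]

lemma ridgedGraph_connected [NeZero n] : (ridgedGraph n).Connected := by
  have hspine : ∀ i : Fin n, (ridgedGraph n).Reachable (i, 0) (0, 0) := by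
    rintro ⟨m, hm⟩
    induction m with
    | zero => rfl
    | succ k ih =>
      exact (ridgedGraph_adj_succ (i := ⟨k, by omega⟩) rfl).reachable.symm.trans (ih (by omega))
  have hreach : ∀ x : Fin n × Fin 3, (ridgedGraph n).Reachable x (0, 0) := by
    rintro ⟨i, c⟩
    by_cases hc : c = 0
    · exact hc ▸ hspine i
    · exact (ridgedGraph_adj_pendant i hc).reachable.symm.trans (hspine i)
  exact ⟨fun x y => (hreach x).trans (hreach y).symm⟩

lemma ridgedGraph_le_gammaUW_vertElems :
    n ≤ gammaUW (ridgedGraph n) (vertElems (Fin n × Fin 3)) (vertElems (Fin n × Fin 3)) := by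
  obtain ⟨A, hA, hdom, hcard⟩ := exists_dominates_ncard_eq_gammaUW
    (G := ridgedGraph n) (subset_refl (vertElems (Fin n × Fin 3)))
  have hmeet : ∀ i : Fin n, ∃ c, Sum.inl (i, c) ∈ A := by
    intro i
    by_cases hv : Sum.inl (i, 1) ∈ A
    · exact ⟨1, hv⟩
    obtain ⟨_, ha, hadj⟩ := hdom _ ⟨(i, 1), rfl⟩ hv
    obtain ⟨x, rfl⟩ := hA ha
    exact ⟨0, ridgedGraph_adj_one_iff.mp hadj ▸ ha⟩
  choose c hc using hmeet
  rw [← hcard]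
  simpa using Set.ncard_le_ncard_of_injOn (s := Set.univ) (fun i => Sum.inl (i, c i))
    (fun i _ => hc i) (fun i _ j _ hij => (by simpa using hij : i = j ∧ _).1)

lemma ridgedGraph_gammaUW_edgeElems_two_mul_le (m : ℕ) :
    gammaUW (ridgedGraph (2 * m)) (edgeElems (ridgedGraph (2 * m)))
      (edgeElems (ridgedGraph (2 * m))) ≤ m := by
  let rung (k : Fin m) : Sym2 (Fin (2 * m) × Fin 3) :=
    s((⟨2 * k, by omega⟩, 0), (⟨2 * k + 1, by omega⟩, 0))
  have hrung (k : Fin m) : rung k ∈ (ridgedGraph (2 * m)).edgeSet := ridgedGraph_adj_succ rfl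
  have hA : Set.range (Sum.inr ∘ rung) ⊆ edgeElems (ridgedGraph (2 * m)) := by
    rintro _ ⟨k, rfl⟩
    exact ⟨rung k, hrung k, rfl⟩
  refine (gammaUW_le_ncard hA (dominates_edgeElems_of_forall fun e he => ?_)).trans ?_
  · obtain ⟨i, hi⟩ := ridgedGraph_exists_spine_mem_of_mem_edgeSet he
    refine ⟨rung ⟨i / 2, by omega⟩, ⟨_, rfl⟩, (i, 0), hi, ?_⟩
    simp only [rung, Sym2.mem_iff, Prod.mk.injEq, Fin.ext_iff, and_true]
    omega
  · simpa using Finite.card_range_le (Sum.inr ∘ rung)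

end Ridged

theorem stmt15_general (r : ℕ) :
    (∃ (k : ℕ) (G : SimpleGraph (Fin k)), G.Connected ∧ Nontrivial (Fin k) ∧
      ((gammaUW G (edgeElems G) (edgeElems G) : ℤ)
        - (gammaUW G (vertElems (Fin k)) (vertElems (Fin k)) : ℤ) > r)) ∧
    (∃ (α : Type) (H : SimpleGraph α), H.Connected ∧ Nontrivial α ∧
      ((gammaUW H (vertElems α) (vertElems α) : ℤ)
        - (gammaUW H (edgeElems H) (edgeElems H) : ℤ) > r)) := by
  constructor
  · have hγ := gammaUW_top_vertElems_le_one (V := Fin (2 * r + 4))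
    have hγ' := card_le_two_mul_gammaUW_top_add_one (V := Fin (2 * r + 4))
    rw [Fintype.card_fin] at hγ'
    exact ⟨2 * r + 4, ⊤, SimpleGraph.connected_top, Fin.nontrivial_iff_two_le.mpr (by omega),
      by omega⟩
  · have hγ := ridgedGraph_le_gammaUW_vertElems (n := 2 * (r + 1))
    have hγ' := ridgedGraph_gammaUW_edgeElems_two_mul_le (r + 1)
    exact ⟨_, ridgedGraph (2 * (r + 1)), ridgedGraph_connected, inferInstance, by omega⟩

theorem stmt15 (r : ℕ) (hr : 0 < r) :
    (∃ (k : ℕ) (G : SimpleGraph (Fin k)), G.Connected ∧ Nontrivial (Fin k) ∧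
      ((gammaUW G (edgeElems G) (edgeElems G) : ℤ)
        - (gammaUW G (vertElems (Fin k)) (vertElems (Fin k)) : ℤ) > r)) ∧
    (∃ (α : Type) (H : SimpleGraph α), H.Connected ∧ Nontrivial α ∧
      ((gammaUW H (vertElems α) (vertElems α) : ℤ)
        - (gammaUW H (edgeElems H) (edgeElems H) : ℤ) > r)) :=
  stmt15_general r
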